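/- arXiv:2101.07488 — 5 statements merged into one kernel-verified Lean document; each statement's English description precedes it below -/
import Mathlib

section
/- Strong Law of Large Numbers for extended Pólya urns: under assumptions (A1)–(A4), the ball-count vector satisfies (ns)^{-1} C_n → v_1 almost surely, and also (ns)^{-1} C_n → v_1 in r-th mean for every r > 0, where s is the principal eigenvalue of the replacement matrix R and v_1 is its stochastic principal left eigenvector. -/
open MeasureTheory ProbabilityTheory Filter Matrix
open scoped Topology NNReal

noncomputable section

/-- An extended Pólya urn process with `d` colours and replacement matrix `R`, adapted to the
filtration `F` on the probability space `(Ω, μ)`.  `C n` is the (row) vector of ball counts at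
time `n`, `χ (n+1)` is the indicator (canonical basis) row vector of the colour drawn at time
`n+1`, the initial configuration `C 0 = C0` is deterministic with positive total mass, the
dynamics are `C (n+1) = C n + χ (n+1) ⬝ R`, the conditional probability of drawing colour `i`
at time `n+1` given `F n` equals `C n i / t n` where `t n = ∑ i, C n i`, and the urn is
tenable: almost surely all coordinates stay nonnegative (assumption (A1)). -/
structure UrnProcess (d : ℕ) {Ω : Type*} [mΩ : MeasurableSpace Ω]
    (μ : Measure Ω) (F : Filtration ℕ mΩ) (R : Matrix (Fin d) (Fin d) ℝ) where
  C : ℕ → Ω → Fin d → ℝ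
  χ : ℕ → Ω → Fin d → ℝ
  adapted : MeasureTheory.Adapted F C
  chi_meas : ∀ n : ℕ, StronglyMeasurable[F (n + 1)] (χ (n + 1))
  C0 : Fin d → ℝ
  C0_det : ∀ ω, C 0 ω = C0
  t0_pos : 0 < ∑ i, C0 i
  dynamics : ∀ n ω, C (n + 1) ω = C n ω + Matrix.vecMul (χ (n + 1) ω) R
  chi_basis : ∀ n ω, ∃ i : Fin d, χ (n + 1) ω = Pi.single i 1
  chi_cond : ∀ (n : ℕ) (i : Fin d),
    μ[Set.indicator {ω | χ (n + 1) ω = Pi.single i 1} (fun _ => (1 : ℝ)) | F n]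
      =ᵐ[μ] fun ω => C n ω i / ∑ j, C n ω j
  tenable : ∀ᵐ ω ∂μ, ∀ n i, 0 ≤ C n ω i

/-- The spectral assumptions (A2)–(A4) on the replacement matrix `R`: `R` is diagonalisable
over ℝ by an invertible matrix `U` (with inverse `V`) as `V * R * U = diagonal lam` with
real eigenvalues `lam 0 ≥ lam 1 ≥ …`; the principal eigenvalue `s = lam 0` is positive and
`s > 2 λ` for every other eigenvalue λ (A2, "small"); the first column of `U` is the all-ones
vector `e⊤` (so `R e⊤ = s e⊤`), and the first row `v₁` of `V = U⁻¹` — the principal left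
eigenvector — is a stochastic vector (A3, "strictly balanced"). -/
structure UrnSpectral (d : ℕ) [NeZero d] (R : Matrix (Fin d) (Fin d) ℝ) where
  U : Matrix (Fin d) (Fin d) ℝ
  V : Matrix (Fin d) (Fin d) ℝ
  UV : U * V = 1
  VU : V * U = 1
  lam : Fin d → ℝ
  diag : R * U = U * Matrix.diagonal lam
  lam_anti : Antitone lam
  s_pos : 0 < lam 0
  small : ∀ j : Fin d, j ≠ 0 → 2 * lam j < lam 0
  U_col_one : ∀ i : Fin d, U i 0 = 1
  v1_nonneg : ∀ i : Fin d, 0 ≤ V 0 i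
  v1_sum : ∑ i, V 0 i = 1

/-!
Let `Y n = C n ᵥ* U` be the coordinates of the composition in the eigenbasis of `R`. By strict
balance `Y n 0 = t₀ + n s` is deterministic. For `j ≠ 0`, `Y_j` moves by `λ_j ξ_{n+1}` with
`ξ` bounded and `E[ξ_{n+1} | F_n] = Y_j(n) / t_n`, so
`E[Y_j(n+1)²] ≤ (1 + max(2λ_j, 0) / t_n) E[Y_j(n)²] + O(1)`; as `max(2λ_j, 0) < s`
(smallness) this gives `E[Y_j(n)²] = O(n)`. Borel–Cantelli along the squares `n = k²` and the
bounded increments of `Y_j` give `Y_j(n) / n → 0` almost surely, hence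
`C n / (n s) = (Y n / (n s)) ᵥ* V → e₀ ᵥ* V = v₁`. Tenability bounds `C n / (n s)`, so
dominated convergence upgrades this to convergence in every mean.
-/

theorem abs_sub_le_mul_of_abs_succ_sub_le {f : ℕ → ℝ} {c : ℝ} (hf : ∀ n, |f (n + 1) - f n| ≤ c)
    {m n : ℕ} (hmn : m ≤ n) : |f n - f m| ≤ (n - m : ℕ) * c := by
  have := dist_le_Ico_sum_of_dist_le (f := f) (d := fun _ => c) hmn fun _ _ => by
    rw [Real.dist_eq, abs_sub_comm]; exact hf _
  simpa [Real.dist_eq, abs_sub_comm] using this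

theorem tendsto_div_of_tendsto_div_sq {f : ℕ → ℝ} {c : ℝ} (hf : ∀ n, |f (n + 1) - f n| ≤ c)
    (hsq : Tendsto (fun k : ℕ => f (k ^ 2) / (k : ℝ) ^ 2) atTop (𝓝 0)) :
    Tendsto (fun n : ℕ => f n / n) atTop (𝓝 0) := by
  have hc : 0 ≤ c := (abs_nonneg _).trans (hf 0)
  have hsqrt : Tendsto Nat.sqrt atTop atTop :=
    tendsto_atTop_atTop.mpr fun b => ⟨b * b, fun n hn => Nat.le_sqrt.mpr hn⟩
  have hbound : ∀ᶠ n : ℕ in atTop, |f n / n| ≤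
      |f (n.sqrt ^ 2) / (n.sqrt : ℝ) ^ 2| + 2 * c / n.sqrt := by
    filter_upwards [eventually_ge_atTop 1] with n hn
    set k := n.sqrt
    have hk : 0 < k := Nat.sqrt_pos.mpr hn
    have hkn : k ^ 2 ≤ n := Nat.sqrt_le' n
    have hnk : n - k ^ 2 ≤ 2 * k := by
      have h1 : n < (k + 1) ^ 2 := Nat.lt_succ_sqrt' n
      have h2 : (k + 1) ^ 2 = k ^ 2 + 2 * k + 1 := by ring
      omega
    have hstep : |f n| ≤ |f (k ^ 2)| + 2 * k * c := by
      have hdrift := abs_sub_le_mul_of_abs_succ_sub_le hf hkn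
      have hgap : ((n - k ^ 2 : ℕ) : ℝ) * c ≤ 2 * k * c :=
        mul_le_mul_of_nonneg_right (by exact_mod_cast hnk) hc
      linarith [abs_sub_abs_le_abs_sub (f n) (f (k ^ 2))]
    have hk2 : (0 : ℝ) < (k : ℝ) ^ 2 := by positivity
    have hk2n : (k : ℝ) ^ 2 ≤ n := by exact_mod_cast hkn
    rw [abs_div, abs_div, Nat.abs_cast, abs_of_pos hk2]
    calc |f n| / n ≤ (|f (k ^ 2)| + 2 * k * c) / (k : ℝ) ^ 2 :=
          div_le_div₀ (by positivity) hstep hk2 hk2n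
      _ = |f (k ^ 2)| / (k : ℝ) ^ 2 + 2 * c / k := by field_simp
  have hlim : Tendsto (fun n : ℕ => |f (n.sqrt ^ 2) / (n.sqrt : ℝ) ^ 2| + 2 * c / n.sqrt)
      atTop (𝓝 0) := by
    simpa using (hsq.abs.comp hsqrt).add ((tendsto_const_div_atTop_nhds_zero_nat _).comp hsqrt)
  exact (tendsto_zero_iff_abs_tendsto_zero _).mpr
    (squeeze_zero' (.of_forall fun _ => abs_nonneg _) hbound hlim)

theorem exists_le_mul_of_le_one_add_div_mul_add {a : ℕ → ℝ} {t₀ s ρ B : ℝ} (ht₀ : 0 < t₀)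
    (hρ : 0 ≤ ρ) (hρs : ρ < s) (ha : ∀ n, a (n + 1) ≤ (1 + ρ / (t₀ + n * s)) * a n + B) :
    ∃ K, ∀ n, a n ≤ K * (t₀ + n * s) := by
  refine ⟨max (a 0 / t₀) (B / (s - ρ)), fun n => ?_⟩
  set K := max (a 0 / t₀) (B / (s - ρ))
  induction n with
  | zero => simpa using (div_le_iff₀ ht₀).mp (le_max_left (a 0 / t₀) (B / (s - ρ)))
  | succ n ih =>
    have ht : 0 < t₀ + n * s := by nlinarith [(n.cast_nonneg : (0 : ℝ) ≤ n)]
    have hB : B ≤ K * (s - ρ) := (div_le_iff₀ (by linarith)).mp (le_max_right _ _)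
    calc a (n + 1) ≤ (1 + ρ / (t₀ + n * s)) * (K * (t₀ + n * s)) + B :=
          (ha n).trans (by gcongr)
      _ = K * (t₀ + n * s) + K * ρ + B := by field_simp
      _ ≤ K * (t₀ + (n + 1 : ℕ) * s) := by push_cast; linarith

section Probability

variable {Ω : Type*} [MeasurableSpace Ω] {μ : Measure Ω}

theorem ae_tendsto_zero_of_summable_integral_norm {E : Type*} [NormedAddCommGroup E]
    {f : ℕ → Ω → E} (hf : ∀ k, Integrable (f k) μ)
    (hsum : Summable fun k => ∫ ω, ‖f k ω‖ ∂μ) :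
    ∀ᵐ ω ∂μ, Tendsto (fun k => f k ω) atTop (𝓝 0) := by
  have h : ∑' k, eLpNorm (f k) 1 μ ≠ ⊤ := by
    simp_rw [eLpNorm_one_eq_lintegral_enorm, ← ofReal_integral_norm_eq_lintegral_enorm (hf _),
      ← ENNReal.ofReal_tsum_of_nonneg (fun k => integral_nonneg fun _ => norm_nonneg _) hsum]
    exact ENNReal.ofReal_ne_top
  filter_upwards [summable_norm_of_tsum_eLpNorm_ne_top le_rfl (fun k => (hf k).1) h] with ω hω
  exact tendsto_zero_iff_norm_tendsto_zero.mpr hω.tendsto_atTop_zero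

theorem ae_tendsto_div_of_integral_sq_isBigO {Y : ℕ → Ω → ℝ} {c : ℝ}
    (hY : ∀ n, Integrable (fun ω => Y n ω ^ 2) μ)
    (hmom : (fun n => ∫ ω, Y n ω ^ 2 ∂μ) =O[atTop] (fun n => (n : ℝ)))
    (hinc : ∀ n ω, |Y (n + 1) ω - Y n ω| ≤ c) :
    ∀ᵐ ω ∂μ, Tendsto (fun n => Y n ω / n) atTop (𝓝 0) := by
  have hdiv : ∀ k : ℕ, (fun ω => (Y (k ^ 2) ω / (k : ℝ) ^ 2) ^ 2)
      = fun ω => Y (k ^ 2) ω ^ 2 / ((k : ℝ) ^ 2) ^ 2 := fun k => by simp only [div_pow]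
  have hsq : ∀ᵐ ω ∂μ, Tendsto (fun k : ℕ => (Y (k ^ 2) ω / (k : ℝ) ^ 2) ^ 2) atTop (𝓝 0) := by
    refine ae_tendsto_zero_of_summable_integral_norm (fun k => ?_) ?_
    · rw [hdiv]; exact (hY _).div_const _
    · refine summable_of_isBigO_nat (Real.summable_one_div_nat_pow.mpr one_lt_two) ?_
      have hpow : Tendsto (fun k : ℕ => k ^ 2) atTop atTop := tendsto_pow_atTop two_ne_zero
      have := (hmom.comp_tendsto hpow).mul
        (Asymptotics.isBigO_refl (fun k : ℕ => (((k : ℝ) ^ 2) ^ 2)⁻¹) _)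
      refine this.congr (fun k => ?_) (fun k => ?_)
      · simp only [Real.norm_eq_abs, abs_pow, sq_abs, hdiv, integral_div]
        simp [div_eq_mul_inv]
      · simp only [Function.comp_apply, Nat.cast_pow]
        rcases eq_or_ne (k : ℝ) 0 with hk | hk
        · simp [hk]
        · field_simp
  filter_upwards [hsq] with ω hω
  refine tendsto_div_of_tendsto_div_sq (fun n => hinc n ω) ?_
  have := hω.sqrt
  simp only [Real.sqrt_sq_eq_abs, Real.sqrt_zero] at this
  exact (tendsto_zero_iff_abs_tendsto_zero _).mpr this

theorem tendsto_integral_norm_sub_rpow_of_ae_tendsto [IsFiniteMeasure μ] {E : Type*}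
    [NormedAddCommGroup E] {X : ℕ → Ω → E} {x : E} {M r : ℝ}
    (hX : ∀ n, AEStronglyMeasurable (X n) μ) (hbdd : ∀ n, ∀ᵐ ω ∂μ, ‖X n ω - x‖ ≤ M)
    (hlim : ∀ᵐ ω ∂μ, Tendsto (fun n => X n ω) atTop (𝓝 x)) (hr : 0 < r) :
    Tendsto (fun n => ∫ ω, ‖X n ω - x‖ ^ r ∂μ) atTop (𝓝 0) := by
  have hcont : Continuous fun v : E => ‖v - x‖ ^ r :=
    (Real.continuous_rpow_const hr.le).comp (continuous_norm.comp (continuous_sub_right x))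
  have := tendsto_integral_of_dominated_convergence (F := fun n ω => ‖X n ω - x‖ ^ r)
    (f := fun _ => 0) (fun _ => M ^ r)
    (fun n => hcont.comp_aestronglyMeasurable (hX n)) (integrable_const _)
    (fun n => (hbdd n).mono fun ω h => by
      rw [Real.norm_of_nonneg (by positivity)]
      exact Real.rpow_le_rpow (norm_nonneg _) h hr.le)
    (hlim.mono fun ω h => by
      simpa [Real.zero_rpow hr.ne'] using ((h.sub_const x).norm).rpow_const (Or.inr hr.le))
  simpa using this

end Probability

theorem integral_mul_condExp {Ω : Type*} {m m₀ : MeasurableSpace Ω} {μ : Measure Ω}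
    [IsFiniteMeasure μ] (hm : m ≤ m₀) {f g : Ω → ℝ} (hf : StronglyMeasurable[m] f)
    (hfg : Integrable (f * g) μ) (hg : Integrable g μ) :
    ∫ ω, f ω * (μ[g | m]) ω ∂μ = ∫ ω, f ω * g ω ∂μ :=
  calc ∫ ω, f ω * (μ[g | m]) ω ∂μ = ∫ ω, (μ[f * g | m]) ω ∂μ :=
        integral_congr_ae (condExp_mul_of_stronglyMeasurable_left hf hfg hg).symm
    _ = ∫ ω, f ω * g ω ∂μ := integral_condExp hm

theorem UrnSpectral.vecMul_U_apply_zero {d : ℕ} [NeZero d] {R : Matrix (Fin d) (Fin d) ℝ}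
    (spec : UrnSpectral d R) (v : Fin d → ℝ) : (v ᵥ* spec.U) 0 = ∑ i, v i := by
  simp [vecMul, dotProduct, spec.U_col_one]

namespace UrnProcess

variable {d : ℕ} {Ω : Type*} [mΩ : MeasurableSpace Ω] {μ : Measure Ω} {F : Filtration ℕ mΩ}
  {R : Matrix (Fin d) (Fin d) ℝ} (urn : UrnProcess d μ F R)

theorem chi_apply_eq_indicator (n : ℕ) (i : Fin d) (ω : Ω) :
    urn.χ (n + 1) ω i = Set.indicator {ω | urn.χ (n + 1) ω = Pi.single i 1} (fun _ => 1) ω := by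
  obtain ⟨k, hk⟩ := urn.chi_basis n ω
  rcases eq_or_ne i k with rfl | hik
  · simp [hk]
  · have hne : Pi.single (M := fun _ => ℝ) k 1 ≠ Pi.single i 1 := fun h => by
      simpa [Pi.single_apply, hik.symm] using congrFun h k
    simp [hk, hik, hne]

theorem measurableSet_chi_eq (n : ℕ) (i : Fin d) :
    MeasurableSet {ω | urn.χ (n + 1) ω = Pi.single i 1} :=
  ((urn.chi_meas n).measurable.mono (F.le _) le_rfl) (measurableSet_singleton _)

theorem condExp_chi_dotProduct [IsFiniteMeasure μ] (n : ℕ) (w : Fin d → ℝ) :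
    μ[fun ω => urn.χ (n + 1) ω ⬝ᵥ w | F n]
      =ᵐ[μ] fun ω => urn.C n ω ⬝ᵥ w / ∑ j, urn.C n ω j := by
  have hχ : (fun ω => urn.χ (n + 1) ω ⬝ᵥ w)
      = ∑ i, w i • Set.indicator {ω | urn.χ (n + 1) ω = Pi.single i 1} (fun _ => (1 : ℝ)) := by
    ext ω
    simp [dotProduct, Finset.sum_apply, chi_apply_eq_indicator, mul_comm]
  rw [hχ]
  filter_upwards [condExp_finsetSum (s := Finset.univ)
      (fun i _ => ((integrable_const (1 : ℝ)).indicator (urn.measurableSet_chi_eq n i)).smul (w i))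
      (F n),
    ae_all_iff.mpr fun i => condExp_smul (μ := μ) (w i)
      (Set.indicator {ω | urn.χ (n + 1) ω = Pi.single i 1} fun _ => (1 : ℝ)) (F n),
    ae_all_iff.mpr fun i => urn.chi_cond n i] with ω hsum hsmul hcond
  simp [hsum, Finset.sum_apply, hsmul, hcond, dotProduct, Finset.sum_div, mul_div_assoc,
    mul_comm]

theorem vecMul_succ_apply {U : Matrix (Fin d) (Fin d) ℝ} {lam : Fin d → ℝ}
    (hRU : R * U = U * diagonal lam) (n : ℕ) (ω : Ω) (j : Fin d) :
    (urn.C (n + 1) ω ᵥ* U) j = (urn.C n ω ᵥ* U) j + lam j * (urn.χ (n + 1) ω ᵥ* U) j := by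
  rw [urn.dynamics, add_vecMul, vecMul_vecMul, hRU, ← vecMul_vecMul, Pi.add_apply,
    vecMul_diagonal, mul_comm]

theorem abs_chi_vecMul_apply_le (U : Matrix (Fin d) (Fin d) ℝ) (n : ℕ) (ω : Ω) (j : Fin d) :
    |(urn.χ (n + 1) ω ᵥ* U) j| ≤ ∑ i, |U i j| := by
  obtain ⟨k, hk⟩ := urn.chi_basis n ω
  rw [hk, single_one_vecMul]
  exact Finset.single_le_sum (f := fun i => |U i j|) (fun _ _ => abs_nonneg _) (Finset.mem_univ k)

theorem abs_vecMul_succ_sub_le {U : Matrix (Fin d) (Fin d) ℝ} {lam : Fin d → ℝ}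
    (hRU : R * U = U * diagonal lam) (n : ℕ) (ω : Ω) (j : Fin d) :
    |(urn.C (n + 1) ω ᵥ* U) j - (urn.C n ω ᵥ* U) j| ≤ |lam j| * ∑ i, |U i j| := by
  rw [urn.vecMul_succ_apply hRU, add_sub_cancel_left, abs_mul]
  exact mul_le_mul_of_nonneg_left (urn.abs_chi_vecMul_apply_le U n ω j) (abs_nonneg _)

theorem stronglyMeasurable_vecMul_apply (U : Matrix (Fin d) (Fin d) ℝ) (n : ℕ) (j : Fin d) :
    StronglyMeasurable[F n] fun ω => (urn.C n ω ᵥ* U) j :=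
  (by fun_prop : Continuous fun v : Fin d → ℝ => (v ᵥ* U) j).comp_stronglyMeasurable
    (urn.adapted n).stronglyMeasurable

theorem abs_vecMul_apply_le {U : Matrix (Fin d) (Fin d) ℝ} {lam : Fin d → ℝ}
    (hRU : R * U = U * diagonal lam) (n : ℕ) (ω : Ω) (j : Fin d) :
    |(urn.C n ω ᵥ* U) j| ≤ |(urn.C0 ᵥ* U) j| + n * (|lam j| * ∑ i, |U i j|) := by
  have := abs_sub_le_mul_of_abs_succ_sub_le (f := fun n => (urn.C n ω ᵥ* U) j)
    (fun n => urn.abs_vecMul_succ_sub_le hRU n ω j) (Nat.zero_le n)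
  rw [urn.C0_det, Nat.sub_zero] at this
  linarith [abs_sub_abs_le_abs_sub ((urn.C n ω ᵥ* U) j) ((urn.C0 ᵥ* U) j)]

theorem integrable_vecMul_apply [IsFiniteMeasure μ] {U : Matrix (Fin d) (Fin d) ℝ}
    {lam : Fin d → ℝ} (hRU : R * U = U * diagonal lam) (n : ℕ) (j : Fin d) :
    Integrable (fun ω => (urn.C n ω ᵥ* U) j) μ :=
  .of_bound ((urn.stronglyMeasurable_vecMul_apply U n j).mono (F.le n)).aestronglyMeasurable _
    (.of_forall fun ω => urn.abs_vecMul_apply_le hRU n ω j)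

theorem integrable_chi_vecMul_apply [IsFiniteMeasure μ] (U : Matrix (Fin d) (Fin d) ℝ) (n : ℕ)
    (j : Fin d) : Integrable (fun ω => (urn.χ (n + 1) ω ᵥ* U) j) μ :=
  .of_bound ((by fun_prop : Continuous fun v : Fin d → ℝ => (v ᵥ* U) j).comp_stronglyMeasurable
    ((urn.chi_meas n).mono (F.le _))).aestronglyMeasurable _
    (.of_forall fun ω => urn.abs_chi_vecMul_apply_le U n ω j)

theorem integrable_sq_vecMul_apply [IsFiniteMeasure μ] {U : Matrix (Fin d) (Fin d) ℝ}
    {lam : Fin d → ℝ} (hRU : R * U = U * diagonal lam) (n : ℕ) (j : Fin d) :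
    Integrable (fun ω => (urn.C n ω ᵥ* U) j ^ 2) μ := by
  simpa only [sq] using (urn.integrable_vecMul_apply hRU n j).mul_bdd
    (urn.integrable_vecMul_apply hRU n j).1
    (.of_forall fun ω => urn.abs_vecMul_apply_le hRU n ω j)

section Spectral

variable [NeZero d] (spec : UrnSpectral d R)

theorem sum_C_eq (n : ℕ) (ω : Ω) :
    ∑ i, urn.C n ω i = ∑ i, urn.C0 i + n * spec.lam 0 := by
  induction n with
  | zero => simp [urn.C0_det]
  | succ n ih =>
    obtain ⟨k, hk⟩ := urn.chi_basis n ω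
    have := urn.vecMul_succ_apply spec.diag n ω 0
    simp only [spec.vecMul_U_apply_zero, hk, Finset.sum_pi_single', Finset.mem_univ,
      if_true] at this
    rw [this, ih]
    push_cast
    ring

theorem integral_vecMul_mul_chi_vecMul [IsFiniteMeasure μ] (n : ℕ) (j : Fin d) :
    ∫ ω, (urn.C n ω ᵥ* spec.U) j * (urn.χ (n + 1) ω ᵥ* spec.U) j ∂μ
      = (∫ ω, (urn.C n ω ᵥ* spec.U) j ^ 2 ∂μ) / (∑ i, urn.C0 i + n * spec.lam 0) := by
  have hξ := urn.integrable_chi_vecMul_apply (μ := μ) spec.U n j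
  rw [← integral_mul_condExp (F.le n) (urn.stronglyMeasurable_vecMul_apply _ n j)
    ((urn.integrable_vecMul_apply spec.diag n j).mul_bdd hξ.1
      (.of_forall fun ω => urn.abs_chi_vecMul_apply_le spec.U n ω j)) hξ, ← integral_div]
  refine integral_congr_ae
    ((urn.condExp_chi_dotProduct n fun i => spec.U i j).mono fun ω h => ?_)
  dsimp only
  rw [show (μ[fun ω => (urn.χ (n + 1) ω ᵥ* spec.U) j | F n]) ω = _ from h]
  simp only [urn.sum_C_eq spec, vecMul]
  ring

theorem integral_sq_vecMul_succ_le [IsProbabilityMeasure μ] (n : ℕ) (j : Fin d) :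
    ∫ ω, (urn.C (n + 1) ω ᵥ* spec.U) j ^ 2 ∂μ
      ≤ (1 + max (2 * spec.lam j) 0 / (∑ i, urn.C0 i + n * spec.lam 0))
          * ∫ ω, (urn.C n ω ᵥ* spec.U) j ^ 2 ∂μ + spec.lam j ^ 2 * (∑ i, |spec.U i j|) ^ 2 := by
  set Y := fun ω => (urn.C n ω ᵥ* spec.U) j
  set ξ := fun ω => (urn.χ (n + 1) ω ᵥ* spec.U) j
  set t := ∑ i, urn.C0 i + n * spec.lam 0
  have ht : 0 < t := by have := urn.t0_pos; have := spec.s_pos; positivity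
  have hY := urn.integrable_vecMul_apply (μ := μ) spec.diag n j
  have hξ := urn.integrable_chi_vecMul_apply (μ := μ) spec.U n j
  have hξ_le : ∀ᵐ ω ∂μ, ‖ξ ω‖ ≤ ∑ i, |spec.U i j| :=
    .of_forall fun ω => urn.abs_chi_vecMul_apply_le spec.U n ω j
  have hY₂ : Integrable (fun ω => Y ω ^ 2) μ := urn.integrable_sq_vecMul_apply spec.diag n j
  have hYξ : Integrable (fun ω => Y ω * ξ ω) μ := hY.mul_bdd hξ.1 hξ_le
  have hξ₂ : Integrable (fun ω => ξ ω ^ 2) μ := by simpa only [sq] using hξ.mul_bdd hξ.1 hξ_le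
  have hexpand : (fun ω => (urn.C (n + 1) ω ᵥ* spec.U) j ^ 2)
      = fun ω => Y ω ^ 2 + ((2 * spec.lam j) * (Y ω * ξ ω) + spec.lam j ^ 2 * ξ ω ^ 2) := by
    ext ω
    rw [urn.vecMul_succ_apply spec.diag]
    ring
  have hξ₂_le : ∫ ω, ξ ω ^ 2 ∂μ ≤ (∑ i, |spec.U i j|) ^ 2 := by
    refine le_of_le_of_eq
      (integral_mono hξ₂ (integrable_const ((∑ i, |spec.U i j|) ^ 2)) fun ω => ?_) (by simp)
    simpa [sq_abs] using
      pow_le_pow_left₀ (abs_nonneg _) (urn.abs_chi_vecMul_apply_le spec.U n ω j) 2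
  have ha : 0 ≤ ∫ ω, Y ω ^ 2 ∂μ := integral_nonneg fun ω => sq_nonneg _
  have hrest : Integrable (fun ω => 2 * spec.lam j * (Y ω * ξ ω) + spec.lam j ^ 2 * ξ ω ^ 2) μ :=
    (hYξ.const_mul _).add (hξ₂.const_mul _)
  rw [hexpand, integral_add hY₂ hrest,
    integral_add (hYξ.const_mul _) (hξ₂.const_mul _), integral_const_mul, integral_const_mul,
    urn.integral_vecMul_mul_chi_vecMul spec]
  have h2lam : 2 * spec.lam j * ((∫ ω, Y ω ^ 2 ∂μ) / t)
      ≤ max (2 * spec.lam j) 0 / t * ∫ ω, Y ω ^ 2 ∂μ := by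
    rw [div_mul_eq_mul_div, mul_div_assoc']
    exact div_le_div_of_nonneg_right (mul_le_mul_of_nonneg_right (le_max_left _ _) ha) ht.le
  nlinarith [mul_le_mul_of_nonneg_left hξ₂_le (sq_nonneg (spec.lam j))]

theorem integral_sq_vecMul_isBigO [IsProbabilityMeasure μ] {j : Fin d} (hj : j ≠ 0) :
    (fun n => ∫ ω, (urn.C n ω ᵥ* spec.U) j ^ 2 ∂μ) =O[atTop] (fun n => (n : ℝ)) := by
  obtain ⟨K, hK⟩ := exists_le_mul_of_le_one_add_div_mul_add
    (a := fun n => ∫ ω, (urn.C n ω ᵥ* spec.U) j ^ 2 ∂μ) urn.t0_pos (le_max_right _ 0)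
    (max_lt (spec.small j hj) spec.s_pos) (urn.integral_sq_vecMul_succ_le spec · j)
  have := urn.t0_pos
  have := spec.s_pos
  refine .of_bound (|K| * (∑ i, urn.C0 i + spec.lam 0)) ?_
  filter_upwards [eventually_ge_atTop 1] with n hn
  have hn' : (1 : ℝ) ≤ n := by exact_mod_cast hn
  rw [Real.norm_of_nonneg (integral_nonneg fun _ => sq_nonneg _), Real.norm_natCast]
  calc _ ≤ K * (∑ i, urn.C0 i + n * spec.lam 0) := hK n
    _ ≤ |K| * (∑ i, urn.C0 i + n * spec.lam 0) :=
      mul_le_mul_of_nonneg_right (le_abs_self K) (by positivity)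
    _ ≤ |K| * (∑ i, urn.C0 i + spec.lam 0) * n := by
      rw [mul_assoc]
      gcongr
      nlinarith

theorem ae_tendsto_vecMul_div [IsProbabilityMeasure μ] {j : Fin d} (hj : j ≠ 0) :
    ∀ᵐ ω ∂μ, Tendsto (fun n : ℕ => (urn.C n ω ᵥ* spec.U) j / n) atTop (𝓝 0) :=
  ae_tendsto_div_of_integral_sq_isBigO (urn.integrable_sq_vecMul_apply spec.diag · j)
    (urn.integral_sq_vecMul_isBigO spec hj)
    (fun n ω => urn.abs_vecMul_succ_sub_le spec.diag n ω j)

theorem ae_tendsto_C_div [IsProbabilityMeasure μ] :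
    ∀ᵐ ω ∂μ, Tendsto (fun n : ℕ => fun i => urn.C n ω i / (n * spec.lam 0)) atTop
      (𝓝 (spec.V 0)) := by
  have hall : ∀ᵐ ω ∂μ, ∀ j : Fin d, j ≠ 0 →
      Tendsto (fun n : ℕ => (urn.C n ω ᵥ* spec.U) j / n) atTop (𝓝 0) :=
    ae_all_iff.mpr fun j => by
      by_cases hj : j = 0
      · exact .of_forall fun _ h => absurd hj h
      · exact (urn.ae_tendsto_vecMul_div spec hj).mono fun _ h _ => h
  filter_upwards [hall] with ω hω
  have hs := spec.s_pos
  have hcoord : Tendsto (fun n : ℕ => ((n : ℝ) * spec.lam 0)⁻¹ • (urn.C n ω ᵥ* spec.U)) atTop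
      (𝓝 (Pi.single 0 1)) := by
    refine tendsto_pi_nhds.mpr fun j => ?_
    rcases eq_or_ne j 0 with rfl | hj
    · have hlim : Tendsto (fun n : ℕ => (∑ i, urn.C0 i) / spec.lam 0 * (n : ℝ)⁻¹ + 1) atTop
          (𝓝 1) := by
        simpa using ((tendsto_inv_atTop_zero.comp tendsto_natCast_atTop_atTop).const_mul
          ((∑ i, urn.C0 i) / spec.lam 0)).add_const 1
      refine hlim.congr' ((eventually_ne_atTop 0).mono fun n hn => ?_)
      simp only [Pi.smul_apply, smul_eq_mul, spec.vecMul_U_apply_zero, urn.sum_C_eq spec]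
      field_simp
    · rw [Pi.single_eq_of_ne hj]
      refine (zero_mul (spec.lam 0)⁻¹ ▸ (hω j hj).mul_const (spec.lam 0)⁻¹).congr fun n => ?_
      simp only [Pi.smul_apply, smul_eq_mul]
      ring
  have hV :=
    ((continuous_id.matrix_vecMul (continuous_const (y := spec.V))).tendsto _).comp hcoord
  simp only [Function.comp_def, id, single_one_vecMul, row] at hV
  refine hV.congr fun n => ?_
  rw [smul_vecMul, vecMul_vecMul, spec.UV, vecMul_one]
  ext i
  simp [div_eq_inv_mul]

theorem norm_C_div_le {ω : Ω} (hω : ∀ n i, 0 ≤ urn.C n ω i) (n : ℕ) :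
    ‖fun i => urn.C n ω i / (n * spec.lam 0)‖ ≤ (∑ i, urn.C0 i + spec.lam 0) / spec.lam 0 := by
  have ht₀ := urn.t0_pos
  have hs := spec.s_pos
  refine (pi_norm_le_iff_of_nonneg (by positivity)).mpr fun i => ?_
  rcases Nat.eq_zero_or_pos n with rfl | hn
  · simpa using by positivity
  have hn' : (1 : ℝ) ≤ n := by exact_mod_cast hn
  have hle : urn.C n ω i ≤ ∑ i, urn.C0 i + n * spec.lam 0 :=
    urn.sum_C_eq spec n ω ▸ Finset.single_le_sum (fun j _ => hω n j) (Finset.mem_univ i)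
  rw [Real.norm_of_nonneg (div_nonneg (hω n i) (by positivity)),
    div_le_div_iff₀ (by positivity) (by positivity)]
  nlinarith [mul_le_mul_of_nonneg_right hle hs.le,
    mul_le_mul_of_nonneg_left hn' (mul_pos ht₀ hs).le]

end Spectral

end UrnProcess

theorem urn_strong_law_of_large_numbers_general {d : ℕ} [NeZero d]
    {Ω : Type*} [mΩ : MeasurableSpace Ω] (μ : Measure Ω) [IsProbabilityMeasure μ]
    (F : Filtration ℕ mΩ) (R : Matrix (Fin d) (Fin d) ℝ)
    (urn : UrnProcess d μ F R) (spec : UrnSpectral d R) :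
    (∀ᵐ ω ∂μ, Tendsto (fun n : ℕ => fun i => urn.C n ω i / (n * spec.lam 0))
        atTop (𝓝 (spec.V 0)))
    ∧ ∀ r : ℝ, 0 < r →
        Tendsto (fun n : ℕ =>
            ∫ ω, ‖(fun i => urn.C n ω i / (n * spec.lam 0)) - spec.V 0‖ ^ r ∂μ)
          atTop (𝓝 0) := by
  refine ⟨urn.ae_tendsto_C_div spec, fun r hr => ?_⟩
  refine tendsto_integral_norm_sub_rpow_of_ae_tendsto
    (M := (∑ i, urn.C0 i + spec.lam 0) / spec.lam 0 + ‖spec.V 0‖)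
    (fun n => ?_) (fun n => ?_) (urn.ae_tendsto_C_div spec) hr
  · have hC : Measurable (urn.C n) := (urn.adapted n).mono (F.le n) le_rfl
    exact (measurable_pi_lambda _ fun i => ((measurable_pi_apply i).comp hC).div_const _).aestronglyMeasurable
  · filter_upwards [urn.tenable] with ω hω
    exact (norm_sub_le _ _).trans (add_le_add_left (urn.norm_C_div_le spec hω n) _)

/-- **Strong Law of Large Numbers for extended Pólya urns** (Theorem 1).  Under assumptions
(A1)–(A4), `(n s)⁻¹ C n → v₁` almost surely, and also in `r`-th mean for every `r > 0`,
where `s = lam 0` is the principal eigenvalue and `v₁ = V 0` is the stochastic principal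
left eigenvector of `R`. -/
theorem urn_strong_law_of_large_numbers {d : ℕ} [NeZero d] (hd : 2 ≤ d)
    {Ω : Type*} [mΩ : MeasurableSpace Ω] (μ : Measure Ω) [IsProbabilityMeasure μ]
    (F : Filtration ℕ mΩ) (R : Matrix (Fin d) (Fin d) ℝ)
    (urn : UrnProcess d μ F R) (spec : UrnSpectral d R) :
    (∀ᵐ ω ∂μ, Tendsto (fun n : ℕ => fun i => urn.C n ω i / (n * spec.lam 0))
        atTop (𝓝 (spec.V 0)))
    ∧ ∀ r : ℝ, 0 < r →
        Tendsto (fun n : ℕ =>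
            ∫ ω, ‖(fun i => urn.C n ω i / (n * spec.lam 0)) - spec.V 0‖ ^ r ∂μ)
          atTop (𝓝 0) :=
  urn_strong_law_of_large_numbers_general (mΩ := mΩ) μ F R urn spec
end
end

section
/- Asymptotics of averaged products of the coefficients b_{n,k}: with s > 0, t_0 > 0, real numbers λ_1 = s ≥ λ_2 ≥ … ≥ λ_d with s > 2λ_j for all j ≥ 2, t_ℓ := t_0 + ℓs, b_{n,n}(j) := 1 and b_{n,k}(j) := ∏_{ℓ=k}^{n−1} (1 + λ_j/t_ℓ) for 0 ≤ k < n, one has lim_{n→∞} (1/n) Σ_{k=1}^{n} b_{n,k}(i) b_{n,k}(j) = s/(s − λ_i − λ_j) for all 2 ≤ i ≤ j ≤ d. -/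
/-!
Write `A n = ∑_{k=1}^n b_{n,k}(λᵢ) b_{n,k}(λⱼ)` and `f n = (1 + λᵢ/t_n)(1 + λⱼ/t_n)`. Splitting
off the term `k = n + 1` gives `A (n+1) = f n · A n + 1`, so the averages `x n = A n / n` satisfy
`x (n+1) = (1 - c n/(n+1)) x n + 1/(n+1)` with `c n = n + 1 - n f n`, and
`c n → γ = 1 - (λᵢ + λⱼ)/s > 0` because `n (f n - 1) ≈ n (λᵢ + λⱼ)/t_n`.
This is a relaxation step towards `(c n)⁻¹ → γ⁻¹` with step sizes `c n/(n+1)` of divergent sum,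
and such a recursion converges to `γ⁻¹` because the distance to the target beyond any tolerance
is multiplied by `∏ (1 - αₖ) ≤ exp (-∑ αₖ) → 0`.
-/

open MeasureTheory ProbabilityTheory Filter
open scoped Topology NNReal

noncomputable section

/-- The coefficients `b_{n,k}(λⱼ) = ∏_{ℓ=k}^{n-1} (1 + λⱼ / t_ℓ)` with `t_ℓ = t₀ + ℓ s`,
arising as the diagonal entries of the matrices `B_{n,k}` in the martingale decomposition of
a balanced extended Pólya urn; by convention `b_{n,n} = 1` (empty product). -/
def bCoef (s t0 lamj : ℝ) (n k : ℕ) : ℝ :=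
  ∏ ℓ ∈ Finset.Ico k n, (1 + lamj / (t0 + ℓ * s))

open Finset

lemma max_abs_convex_comb_sub_le {x y L a ε : ℝ} (ha : a ∈ Set.Icc (0 : ℝ) 1)
    (hy : |y - L| ≤ ε) :
    max (|(1 - a) * x + a * y - L| - ε) 0 ≤ (1 - a) * max (|x - L| - ε) 0 := by
  obtain ⟨ha0, ha1⟩ := ha
  have hdist : |(1 - a) * x + a * y - L| ≤ (1 - a) * |x - L| + a * ε := by
    calc |(1 - a) * x + a * y - L| = |(1 - a) * (x - L) + a * (y - L)| := by ring_nf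
      _ ≤ |(1 - a) * (x - L)| + |a * (y - L)| := abs_add_le _ _
      _ = (1 - a) * |x - L| + a * |y - L| := by
        rw [abs_mul, abs_mul, abs_of_nonneg (sub_nonneg.2 ha1), abs_of_nonneg ha0]
      _ ≤ (1 - a) * |x - L| + a * ε := by gcongr
  refine max_le ?_ (mul_nonneg (sub_nonneg.2 ha1) (le_max_right _ _))
  nlinarith [le_max_left (|x - L| - ε) 0]

theorem tendsto_of_convex_recurrence {x α y : ℕ → ℝ} {L : ℝ}
    (hα : ∀ᶠ n in atTop, α n ∈ Set.Icc (0 : ℝ) 1) (hα_sum : ¬ Summable α)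
    (hy : Tendsto y atTop (𝓝 L))
    (hx : ∀ᶠ n in atTop, x (n + 1) = (1 - α n) * x n + α n * y n) :
    Tendsto x atTop (𝓝 L) := by
  rw [Metric.tendsto_atTop]
  intro ε hε
  obtain ⟨N, hN⟩ := eventually_atTop.1
    (hα.and (hx.and (hy.eventually (Metric.closedBall_mem_nhds L (half_pos hε)))))
  set g : ℕ → ℝ := fun n => max (|x n - L| - ε / 2) 0
  set S : ℕ → ℝ := fun m => ∑ k ∈ range m, α (k + N)
  have hbound : ∀ m, g (m + N) ≤ g N * Real.exp (-S m) := by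
    intro m
    induction m with
    | zero => simp [S]
    | succ m ih =>
      obtain ⟨hαm, hxm, hym⟩ := hN (m + N) (by omega)
      have hstep : g (m + N + 1) ≤ (1 - α (m + N)) * g (m + N) := by
        simp only [g, hxm]
        exact max_abs_convex_comb_sub_le hαm hym
      calc g (m + 1 + N) ≤ (1 - α (m + N)) * g (m + N) := by rwa [Nat.add_right_comm]
        _ ≤ Real.exp (-α (m + N)) * (g N * Real.exp (-S m)) :=
          mul_le_mul (Real.one_sub_le_exp_neg _) ih (le_max_right _ _) (Real.exp_nonneg _)
        _ = g N * Real.exp (-S (m + 1)) := by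
          simp only [S, sum_range_succ, neg_add, Real.exp_add]
          ring
  have hS : Tendsto S atTop atTop :=
    (not_summable_iff_tendsto_nat_atTop_of_nonneg fun k => (hN (k + N) (by omega)).1.1).1
      (mt (summable_nat_add_iff N).1 hα_sum)
  have hlim : Tendsto (fun m => g N * Real.exp (-S m)) atTop (𝓝 0) := by
    simpa using (Real.tendsto_exp_neg_atTop_nhds_zero.comp hS).const_mul (g N)
  obtain ⟨M, hM⟩ := eventually_atTop.1 (hlim.eventually (gt_mem_nhds (half_pos hε)))
  refine ⟨M + N, fun n hn => ?_⟩
  obtain ⟨m, rfl⟩ : ∃ m, n = m + N := ⟨n - N, by omega⟩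
  have hg := (hbound m).trans_lt (hM m (by omega))
  rw [Real.dist_eq]
  linarith [le_max_left (|x (m + N) - L| - ε / 2) 0]

theorem tendsto_inv_of_recurrence {x c : ℕ → ℝ} {γ : ℝ} (hγ : 0 < γ)
    (hc : Tendsto c atTop (𝓝 γ))
    (hx : ∀ᶠ n in atTop, x (n + 1) = (1 - c n / (n + 1)) * x n + 1 / (n + 1)) :
    Tendsto x atTop (𝓝 γ⁻¹) := by
  have hc_pos : ∀ᶠ n in atTop, γ / 2 < c n := hc.eventually (lt_mem_nhds (half_lt_self hγ))
  have hc_le : ∀ᶠ n : ℕ in atTop, c n ≤ n + 1 := by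
    filter_upwards [hc.eventually (gt_mem_nhds (lt_add_one γ)),
      tendsto_natCast_atTop_atTop.eventually_ge_atTop γ] with n h1 h2
    linarith
  refine tendsto_of_convex_recurrence (α := fun n => c n / (n + 1)) ?_ ?_ (hc.inv₀ hγ.ne') ?_
  · filter_upwards [hc_pos, hc_le] with n h1 h2
    exact ⟨div_nonneg (by linarith) (by positivity), (div_le_one (by positivity)).2 h2⟩
  · intro hsum
    have hharmonic : Summable fun n : ℕ => 1 / ((n : ℝ) + 1) := by
      refine (hsum.mul_left (2 / γ)).of_norm_bounded_eventually_nat ?_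
      filter_upwards [hc_pos] with n hn
      rw [Real.norm_of_nonneg (by positivity), ← mul_div_assoc, div_le_div_iff_of_pos_right
        (by positivity), div_mul_eq_mul_div, le_div_iff₀ hγ]
      linarith
    exact Real.not_summable_one_div_natCast ((summable_nat_add_iff 1).1 (by simpa using hharmonic))
  · filter_upwards [hx, hc_pos] with n hn hcn
    rw [hn, div_mul_eq_mul_div, mul_inv_cancel₀ (by linarith)]

lemma bCoef_succ (s t0 lamj : ℝ) {n k : ℕ} (hk : k ≤ n) :
    bCoef s t0 lamj (n + 1) k = bCoef s t0 lamj n k * (1 + lamj / (t0 + n * s)) := by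
  simp [bCoef, prod_Ico_succ_top hk]

lemma sum_bCoef_mul_succ (s t0 a b : ℝ) (n : ℕ) :
    ∑ k ∈ Icc 1 (n + 1), bCoef s t0 a (n + 1) k * bCoef s t0 b (n + 1) k
      = (1 + a / (t0 + n * s)) * (1 + b / (t0 + n * s))
          * ∑ k ∈ Icc 1 n, bCoef s t0 a n k * bCoef s t0 b n k + 1 := by
  have hself : ∀ c, bCoef s t0 c (n + 1) (n + 1) = 1 := fun _ => by simp [bCoef]
  rw [sum_Icc_succ_top (by omega), mul_sum, hself, hself, mul_one]
  congr 1
  refine sum_congr rfl fun k hk => ?_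
  rw [bCoef_succ _ _ _ (mem_Icc.1 hk).2, bCoef_succ _ _ _ (mem_Icc.1 hk).2]
  ring

lemma tendsto_succ_sub_mul_factor {s : ℝ} (hs : s ≠ 0) (t0 a b : ℝ) :
    Tendsto (fun n : ℕ => (n + 1 : ℝ) - n * ((1 + a / (t0 + n * s)) * (1 + b / (t0 + n * s))))
      atTop (𝓝 (1 - (a + b) / s)) := by
  have hr : Tendsto (fun n : ℕ => (n : ℝ) / (t0 + n * s)) atTop (𝓝 s⁻¹) := by
    have := (tendsto_natCast_div_add_atTop (t0 / s)).const_mul s⁻¹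
    rw [mul_one] at this
    refine this.congr fun n => ?_
    field_simp
    ring
  have hlim := ((hr.const_mul (a + b)).add
    (((hr.pow 2).mul tendsto_inv_atTop_nhds_zero_nat).const_mul (a * b))).const_sub 1
  rw [mul_zero, mul_zero, add_zero, ← div_eq_mul_inv] at hlim
  refine hlim.congr' ?_
  filter_upwards [eventually_ne_atTop 0] with n hn
  have hn' : (n : ℝ) ≠ 0 := Nat.cast_ne_zero.2 hn
  -- `t0 + n * s` may vanish, so no `field_simp`: the identity only needs `n * n⁻¹ = 1`
  simp only [div_eq_mul_inv]
  linear_combination -(a * b * n * (t0 + n * s)⁻¹ ^ 2) * mul_inv_cancel₀ hn'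

theorem bCoef_average_product_limit_general {d : ℕ} [NeZero d] (s t0 : ℝ)
    (hs : 0 < s) (lam : Fin d → ℝ)
    (hsmall : ∀ j : Fin d, j ≠ 0 → 2 * lam j < s) :
    ∀ i j : Fin d, i ≠ 0 → j ≠ 0 → i ≤ j →
      Tendsto (fun n : ℕ => (1 / n : ℝ) * ∑ k ∈ Finset.Icc 1 n,
          bCoef s t0 (lam i) n k * bCoef s t0 (lam j) n k)
        atTop (𝓝 (s / (s - lam i - lam j))) := by
  intro i j hi hj _
  have hγ : 0 < 1 - (lam i + lam j) / s := by
    rw [sub_pos, div_lt_one hs]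
    linarith [hsmall i hi, hsmall j hj]
  convert tendsto_inv_of_recurrence hγ (tendsto_succ_sub_mul_factor hs.ne' t0 (lam i) (lam j))
    (Eventually.of_forall fun n => ?_) using 2
  · field_simp
    ring
  · rw [sum_bCoef_mul_succ]
    rcases n with _ | n
    · simp
    · push_cast
      field_simp
      ring

/-- **Asymptotics of averaged products of the coefficients `b_{n,k}`** (Lemma 1, Eq. (26)).
If `s > 0`, `t₀ > 0`, and `λ₁ = s ≥ λ₂ ≥ … ≥ λ_d` with `s > 2 λⱼ` for all `j ≥ 2`, then for
all `2 ≤ i ≤ j ≤ d`, `(1/n) ∑_{k=1}^n b_{n,k}(i) b_{n,k}(j) → s / (s − λᵢ − λⱼ)`. -/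
theorem bCoef_average_product_limit {d : ℕ} [NeZero d] (hd : 2 ≤ d) (s t0 : ℝ)
    (hs : 0 < s) (ht0 : 0 < t0) (lam : Fin d → ℝ) (hlam0 : lam 0 = s) (hanti : Antitone lam)
    (hsmall : ∀ j : Fin d, j ≠ 0 → 2 * lam j < s) :
    ∀ i j : Fin d, i ≠ 0 → j ≠ 0 → i ≤ j →
      Tendsto (fun n : ℕ => (1 / n : ℝ) * ∑ k ∈ Finset.Icc 1 n,
          bCoef s t0 (lam i) n k * bCoef s t0 (lam j) n k)
        atTop (𝓝 (s / (s - lam i - lam j))) :=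
  bCoef_average_product_limit_general s t0 hs lam hsmall
end
end

section
/- Weighted Toeplitz-type convergence in probability: let s > 0, t_0 > 0 and real numbers λ_1 = s ≥ λ_2 ≥ … ≥ λ_d with s > 2λ_j for all j ≥ 2; set t_ℓ := t_0 + ℓs, b_{n,n}(j) := 1 and b_{n,k}(j) := ∏_{ℓ=k}^{n−1}(1 + λ_j/t_ℓ). If {Z_n} is a sequence of real random variables with Z_n → Z in probability, then for all 2 ≤ i ≤ j ≤ d, (1/n) Σ_{k=1}^{n} b_{n,k}(i) b_{n,k}(j) Z_k → (s/(s − λ_i − λ_j)) Z in probability as n → ∞. -/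
open MeasureTheory ProbabilityTheory Filter
open scoped Topology NNReal

noncomputable section

open Finset

section Recursions

theorem tendsto_sum_range_atTop_of_eventually_le {u v : ℕ → ℝ} (hvu : ∀ᶠ k in atTop, v k ≤ u k)
    (hv : Tendsto (fun n => ∑ k ∈ range n, v k) atTop atTop) :
    Tendsto (fun n => ∑ k ∈ range n, u k) atTop atTop := by
  obtain ⟨N, hN⟩ := eventually_atTop.mp hvu
  have hbdd : ∀ᶠ n in atTop, ∑ k ∈ range N, (u k - v k) ≤ ∑ k ∈ range n, (u k - v k) := by
    filter_upwards [eventually_ge_atTop N] with n hn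
    refine sum_le_sum_of_subset_of_nonneg (range_subset_range.mpr hn) fun k _ hk => ?_
    exact sub_nonneg.mpr (hN k (by simpa using hk))
  refine (tendsto_atTop_add_left_of_le' _ _ hbdd hv).congr fun n => ?_
  rw [← sum_add_distrib]
  simp

theorem tendsto_prod_Ico_one_sub_zero {β : ℕ → ℝ} {N : ℕ} (hβ : ∀ n ≥ N, β n ≤ 1)
    (hsum : Tendsto (fun n => ∑ k ∈ range n, β k) atTop atTop) :
    Tendsto (fun n => ∏ k ∈ Ico N n, (1 - β k)) atTop (𝓝 0) := by
  have hnonneg : ∀ n, ∀ k ∈ Ico N n, 0 ≤ 1 - β k := fun n k hk =>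
    sub_nonneg.mpr (hβ k (mem_Ico.mp hk).1)
  have htail : Tendsto (fun n => ∑ k ∈ Ico N n, β k) atTop atTop := by
    refine (tendsto_atTop_add_const_right _ (-∑ k ∈ range N, β k) hsum).congr' ?_
    filter_upwards [eventually_ge_atTop N] with n hn
    rw [sum_Ico_eq_sub _ hn, sub_eq_add_neg]
  have hexp : Tendsto (fun n => Real.exp (-∑ k ∈ Ico N n, β k)) atTop (𝓝 0) :=
    Real.tendsto_exp_atBot.comp (tendsto_neg_atTop_atBot.comp htail)
  refine squeeze_zero (fun n => prod_nonneg (hnonneg n)) (fun n => ?_) hexp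
  rw [← sum_neg_distrib, Real.exp_sum]
  exact prod_le_prod (hnonneg n) fun k _ => by linarith [Real.add_one_le_exp (-β k)]

theorem tendsto_zero_of_le_one_sub_mul_add {y β γ : ℕ → ℝ} (hy : ∀ n, 0 ≤ y n)
    (hβ : ∀ᶠ n in atTop, β n ≤ 1) (hsum : Tendsto (fun n => ∑ k ∈ range n, β k) atTop atTop)
    (hγ : ∀ ε > 0, ∀ᶠ n in atTop, γ n ≤ ε * β n)
    (hrec : ∀ᶠ n in atTop, y (n + 1) ≤ (1 - β n) * y n + γ n) :
    Tendsto y atTop (𝓝 0) := by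
  refine tendsto_order.mpr
    ⟨fun a ha => Eventually.of_forall fun n => ha.trans_le (hy n), fun a ha => ?_⟩
  obtain ⟨N, hN⟩ := eventually_atTop.mp ((hβ.and (hγ (a / 2) (half_pos ha))).and hrec)
  have hP := (tendsto_prod_Ico_one_sub_zero (fun n hn => (hN n hn).1.1) hsum).mul_const
    (y N - a / 2)
  rw [zero_mul] at hP
  have hcontract : ∀ n ≥ N, y n - a / 2 ≤ (∏ k ∈ Ico N n, (1 - β k)) * (y N - a / 2) := by
    intro n hn
    induction n, hn using Nat.le_induction with
    | base => simp
    | succ n hn ih =>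
      obtain ⟨⟨hβn, hγn⟩, hrecn⟩ := hN n hn
      calc y (n + 1) - a / 2 ≤ (1 - β n) * (y n - a / 2) := by linarith
        _ ≤ (1 - β n) * ((∏ k ∈ Ico N n, (1 - β k)) * (y N - a / 2)) :=
          mul_le_mul_of_nonneg_left ih (sub_nonneg.mpr hβn)
        _ = _ := by rw [prod_Ico_succ_top hn]; ring
  filter_upwards [eventually_ge_atTop N, hP.eventually (eventually_lt_nhds (half_pos ha))]
    with n hn hPn
  linarith [hcontract n hn]

theorem Filter.Tendsto.eventually_div_natCast_add_one_le_one {b : ℕ → ℝ} {b₀ : ℝ}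
    (hb : Tendsto b atTop (𝓝 b₀)) : ∀ᶠ n : ℕ in atTop, b n / (n + 1) ≤ 1 :=
  (hb.div_atTop (tendsto_atTop_add_const_right _ 1 tendsto_natCast_atTop_atTop)).eventually
    (eventually_le_nhds one_pos)

theorem tendsto_zero_of_le_one_sub_div_mul_add_div {y b g : ℕ → ℝ} {b₀ : ℝ}
    (hy : ∀ n, 0 ≤ y n) (hb : Tendsto b atTop (𝓝 b₀)) (hb₀ : 0 < b₀)
    (hg : Tendsto g atTop (𝓝 0))
    (hrec : ∀ᶠ n : ℕ in atTop, y (n + 1) ≤ (1 - b n / (n + 1)) * y n + g n / (n + 1)) :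
    Tendsto y atTop (𝓝 0) := by
  have hb_half : ∀ᶠ n in atTop, b₀ / 2 ≤ b n :=
    hb.eventually (eventually_ge_nhds (half_lt_self hb₀))
  refine tendsto_zero_of_le_one_sub_mul_add hy hb.eventually_div_natCast_add_one_le_one ?_
    (fun ε hε => ?_) hrec
  · refine tendsto_sum_range_atTop_of_eventually_le (v := fun k => b₀ / 2 * (1 / (k + 1))) ?_ ?_
    · filter_upwards [hb_half] with k hk
      rw [mul_one_div]
      gcongr
    · simp_rw [← mul_sum]
      exact Real.tendsto_sum_range_one_div_nat_succ_atTop.const_mul_atTop (half_pos hb₀)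
  · filter_upwards [hb_half, hg.eventually (eventually_le_nhds (mul_pos hε (half_pos hb₀)))]
      with n hbn hgn
    rw [← mul_div_assoc]
    gcongr
    nlinarith

end Recursions

section Toeplitz

theorem sum_Icc_prod_Ico_mul_succ (q e : ℕ → ℝ) (n : ℕ) :
    ∑ k ∈ Icc 1 (n + 1), (∏ ℓ ∈ Ico k (n + 1), q ℓ) * e k =
      q n * ∑ k ∈ Icc 1 n, (∏ ℓ ∈ Ico k n, q ℓ) * e k + e (n + 1) := by
  rw [sum_Icc_succ_top (by omega), Ico_self, prod_empty, one_mul, mul_sum]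
  congr 1
  refine sum_congr rfl fun k hk => ?_
  rw [prod_Ico_succ_top (mem_Icc.mp hk).2]
  ring

variable {q : ℕ → ℝ} {α : ℝ}

theorem tendsto_sum_prod_Ico_mul_div (hα : α < 1)
    (hq : Tendsto (fun n : ℕ => (n : ℝ) * (q n - 1)) atTop (𝓝 α)) {e : ℕ → ℝ} {e₀ : ℝ}
    (he : Tendsto e atTop (𝓝 e₀)) :
    Tendsto (fun n : ℕ => (∑ k ∈ Icc 1 n, (∏ ℓ ∈ Ico k n, q ℓ) * e k) / n) atTop
      (𝓝 (e₀ / (1 - α))) := by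
  set T : ℕ → ℝ := fun n => ∑ k ∈ Icc 1 n, (∏ ℓ ∈ Ico k n, q ℓ) * e k with hT
  set M := e₀ / (1 - α)
  set b : ℕ → ℝ := fun n => 1 - n * (q n - 1) with hb_def
  have hb : Tendsto b atTop (𝓝 (1 - α)) := tendsto_const_nhds.sub hq
  have hstep : ∀ n : ℕ, n ≠ 0 → T (n + 1) / (n + 1 : ℕ) - M =
      (1 - b n / (n + 1)) * (T n / n - M) + (e (n + 1) - b n * M) / (n + 1) := by
    intro n hn
    have hn' : (n : ℝ) ≠ 0 := Nat.cast_ne_zero.mpr hn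
    simp only [hT, hb_def, sum_Icc_prod_Ico_mul_succ]
    push_cast
    field_simp
    ring
  have hg : Tendsto (fun n => |e (n + 1) - b n * M|) atTop (𝓝 0) := by
    have hM : e₀ - (1 - α) * M = 0 := by
      simp only [M]
      field_simp [sub_ne_zero.mpr hα.ne']
      ring
    simpa [hM] using ((he.comp (tendsto_add_atTop_nat 1)).sub (hb.mul_const M)).abs
  rw [tendsto_iff_norm_sub_tendsto_zero]
  refine tendsto_zero_of_le_one_sub_div_mul_add_div (fun n => norm_nonneg _) hb
    (sub_pos.mpr hα) hg ?_
  filter_upwards [eventually_ne_atTop 0, hb.eventually_div_natCast_add_one_le_one]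
    with n hn hbn
  rw [Real.norm_eq_abs, Real.norm_eq_abs, hstep n hn]
  refine (abs_add_le _ _).trans_eq ?_
  rw [abs_mul, abs_div, abs_of_nonneg (sub_nonneg.mpr hbn),
    abs_of_pos (by positivity : (0 : ℝ) < n + 1)]

theorem tendsto_sum_abs_prod_Ico_mul_div (hα : α < 1)
    (hq : Tendsto (fun n : ℕ => (n : ℝ) * (q n - 1)) atTop (𝓝 α)) {e : ℕ → ℝ} {e₀ : ℝ}
    (he : Tendsto e atTop (𝓝 e₀)) :
    Tendsto (fun n : ℕ => (∑ k ∈ Icc 1 n, |∏ ℓ ∈ Ico k n, q ℓ| * e k) / n) atTop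
      (𝓝 (e₀ / (1 - α))) := by
  have hq_nonneg : ∀ᶠ n in atTop, 0 ≤ q n := by
    filter_upwards [(hq.div_atTop tendsto_natCast_atTop_atTop).eventually
      (eventually_gt_nhds neg_one_lt_zero), eventually_ne_atTop 0] with n h hn
    rw [mul_div_cancel_left₀ _ (Nat.cast_ne_zero.mpr hn)] at h
    linarith
  have hq_abs : Tendsto (fun n : ℕ => (n : ℝ) * (|q n| - 1)) atTop (𝓝 α) := by
    refine hq.congr' ?_
    filter_upwards [hq_nonneg] with n h
    rw [abs_of_nonneg h]
  simpa only [abs_prod] using tendsto_sum_prod_Ico_mul_div hα hq_abs he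

end Toeplitz

section InMeasure

variable {Ω E ι : Type*} {mΩ : MeasurableSpace Ω} {μ : Measure Ω} {l : Filter ι}

theorem MeasureTheory.TendstoInMeasure.add [SeminormedAddCommGroup E] {f g : ι → Ω → E}
    {F G : Ω → E} (hf : TendstoInMeasure μ f l F) (hg : TendstoInMeasure μ g l G) :
    TendstoInMeasure μ (fun i ω => f i ω + g i ω) l (fun ω => F ω + G ω) := by
  rw [tendstoInMeasure_iff_norm] at hf hg ⊢
  intro ε hε
  have hsub : ∀ i, {ω | ε ≤ ‖f i ω + g i ω - (F ω + G ω)‖} ⊆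
      {ω | ε / 2 ≤ ‖f i ω - F ω‖} ∪ {ω | ε / 2 ≤ ‖g i ω - G ω‖} := by
    intro i ω hω
    by_contra h
    simp only [Set.mem_union, Set.mem_ofPred_eq, not_or, not_le, add_sub_add_comm] at h hω
    linarith [norm_add_le (f i ω - F ω) (g i ω - G ω)]
  have hsum := (hf _ (half_pos hε)).add (hg _ (half_pos hε))
  rw [add_zero] at hsum
  exact tendsto_of_tendsto_of_tendsto_of_le_of_le tendsto_const_nhds hsum (fun i => zero_le)
    fun i => (measure_mono (hsub i)).trans (measure_union_le _ _)

theorem tendstoInMeasure_zero_of_tendsto_integral_norm [NormedAddCommGroup E] {f : ι → Ω → E}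
    (hf : ∀ i, Integrable (f i) μ) (h : Tendsto (fun i => ∫ ω, ‖f i ω‖ ∂μ) l (𝓝 0)) :
    TendstoInMeasure μ f l 0 := by
  refine tendstoInMeasure_of_tendsto_eLpNorm one_ne_zero (fun i => (hf i).aestronglyMeasurable)
    aestronglyMeasurable_zero ?_
  simp_rw [sub_zero, eLpNorm_one_eq_lintegral_enorm,
    ← ofReal_integral_norm_eq_lintegral_enorm (hf _)]
  simpa using ENNReal.tendsto_ofReal h

theorem tendstoInMeasure_sum_mul [IsFiniteMeasure μ] {X : ℕ → Ω → ℝ} {Y : Ω → ℝ}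
    {I : ℕ → Finset ℕ} {w : ℕ → ℕ → ℝ} {c : ℝ}
    (hXY : ∀ k, Integrable (fun ω => X k ω - Y ω) μ) (hY : AEStronglyMeasurable Y μ)
    (hw : Tendsto (fun n => ∑ k ∈ I n, w n k) atTop (𝓝 c))
    (hL1 : Tendsto (fun n => ∑ k ∈ I n, |w n k| * ∫ ω, |X k ω - Y ω| ∂μ) atTop (𝓝 0)) :
    TendstoInMeasure μ (fun n ω => ∑ k ∈ I n, w n k * X k ω) atTop (fun ω => c * Y ω) := by
  set G : ℕ → Ω → ℝ := fun n ω => ∑ k ∈ I n, w n k * (X k ω - Y ω) with hG_def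
  have hG : ∀ n, Integrable (G n) μ := fun n =>
    integrable_finsetSum _ fun k _ => (hXY k).const_mul _
  have hG_le : ∀ n, ∫ ω, ‖G n ω‖ ∂μ ≤ ∑ k ∈ I n, |w n k| * ∫ ω, |X k ω - Y ω| ∂μ := by
    intro n
    have hbound : ∀ k ∈ I n, Integrable (fun ω => |w n k| * |X k ω - Y ω|) μ :=
      fun k _ => (hXY k).abs.const_mul _
    calc ∫ ω, ‖G n ω‖ ∂μ ≤ ∫ ω, ∑ k ∈ I n, |w n k| * |X k ω - Y ω| ∂μ := by
          refine integral_mono (hG n).norm (integrable_finsetSum _ hbound) fun ω => ?_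
          refine (abs_sum_le_sum_abs _ _).trans_eq ?_
          simp only [abs_mul]
      _ = _ := by
          rw [integral_finsetSum _ hbound]
          simp_rw [integral_const_mul]
  have hG0 : TendstoInMeasure μ G atTop 0 := tendstoInMeasure_zero_of_tendsto_integral_norm hG
    (squeeze_zero (fun n => integral_nonneg fun ω => norm_nonneg _) hG_le hL1)
  have hH : TendstoInMeasure μ (fun n ω => (∑ k ∈ I n, w n k) * Y ω) atTop (fun ω => c * Y ω) :=
    tendstoInMeasure_of_tendsto_ae (fun n => hY.const_mul _)
      (ae_of_all _ fun ω => hw.mul_const _)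
  convert hG0.add hH using 2 with n ω
  · simp only [hG_def, sum_mul, ← sum_add_distrib, mul_sub, sub_add_cancel]
  · simp

end InMeasure

theorem bCoef_mul_bCoef (s t0 x y : ℝ) (n k : ℕ) :
    bCoef s t0 x n k * bCoef s t0 y n k =
      ∏ ℓ ∈ Ico k n, (1 + x / (t0 + ℓ * s)) * (1 + y / (t0 + ℓ * s)) :=
  prod_mul_distrib.symm

theorem tendsto_natCast_mul_bCoef_factor_sub_one {s : ℝ} (hs : 0 < s) (t0 x y : ℝ) :
    Tendsto (fun n : ℕ => (n : ℝ) * ((1 + x / (t0 + n * s)) * (1 + y / (t0 + n * s)) - 1))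
      atTop (𝓝 ((x + y) / s)) := by
  have ht : Tendsto (fun n : ℕ => t0 + n * s) atTop atTop :=
    tendsto_atTop_add_const_left _ t0 (tendsto_natCast_atTop_atTop.atTop_mul_const hs)
  have hn : Tendsto (fun n : ℕ => (n : ℝ) * (t0 + n * s)⁻¹) atTop (𝓝 (1 / s)) := by
    refine ((tendsto_natCast_div_add_atTop (t0 / s)).div_const s).congr fun n => ?_
    rw [div_div, show ((n : ℝ) + t0 / s) * s = t0 + n * s by field_simp; ring, div_eq_mul_inv]
  have hlim := ((tendsto_const_nhds (x := x + y)).add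
    ((tendsto_inv_atTop_zero.comp ht).const_mul (x * y))).mul hn
  rw [mul_zero, add_zero, mul_one_div] at hlim
  exact hlim.congr fun n => by simp only [Function.comp_apply]; ring

theorem bCoef_weighted_tendsto_in_probability_general {d : ℕ} [NeZero d] (s t0 : ℝ)
    (hs : 0 < s) (lam : Fin d → ℝ)
    (hsmall : ∀ j : Fin d, j ≠ 0 → 2 * lam j < s)
    {Ω : Type*} [mΩ : MeasurableSpace Ω] (μ : Measure Ω) [IsProbabilityMeasure μ]
    (Z : ℕ → Ω → ℝ) (Zlim : Ω → ℝ) (hZlim : Measurable Zlim)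
    (hint : ∀ n, Integrable (fun ω => Z n ω - Zlim ω) μ)
    (hL1 : Tendsto (fun n => ∫ ω, |Z n ω - Zlim ω| ∂μ) atTop (𝓝 0)) :
    ∀ i j : Fin d, i ≠ 0 → j ≠ 0 → i ≤ j →
      TendstoInMeasure μ
        (fun (n : ℕ) ω => (1 / n : ℝ) * ∑ k ∈ Finset.Icc 1 n,
          bCoef s t0 (lam i) n k * bCoef s t0 (lam j) n k * Z k ω)
        atTop (fun ω => s / (s - lam i - lam j) * Zlim ω) := by
  intro i j hi hj _
  have hα : (lam i + lam j) / s < 1 := (div_lt_one hs).mpr (by linarith [hsmall i hi, hsmall j hj])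
  have hq := tendsto_natCast_mul_bCoef_factor_sub_one hs t0 (lam i) (lam j)
  have hw := tendsto_sum_prod_Ico_mul_div hα hq (tendsto_const_nhds (x := (1 : ℝ)))
  have hE := tendsto_sum_abs_prod_Ico_mul_div hα hq hL1
  have hc : 1 / (1 - (lam i + lam j) / s) = s / (s - lam i - lam j) := by
    rw [one_sub_div hs.ne', one_div_div, sub_add_eq_sub_sub]
  rw [zero_div] at hE
  rw [hc] at hw
  refine (tendstoInMeasure_sum_mul (I := fun n => Icc 1 n)
    (w := fun n k => 1 / n * (bCoef s t0 (lam i) n k * bCoef s t0 (lam j) n k))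
    hint hZlim.aestronglyMeasurable ?_ ?_).congr_left fun n => ae_of_all _ fun ω => ?_
  · simpa [bCoef_mul_bCoef, ← mul_sum, div_eq_inv_mul] using hw
  · simpa [bCoef_mul_bCoef, abs_mul, mul_assoc, ← mul_sum, div_eq_inv_mul] using hE
  · simp only [mul_sum, mul_assoc]

/-- **Weighted Toeplitz-type convergence in probability** (Corollary 3).  If `s > 0`,
`t₀ > 0`, `λ₁ = s ≥ λ₂ ≥ … ≥ λ_d` with `s > 2 λⱼ` for `j ≥ 2`, and `Z n → Z` in probability
(with, as in the paper's proof, `E|Z n − Z| → 0`), then for all `2 ≤ i ≤ j ≤ d`,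
`(1/n) ∑_{k=1}^n b_{n,k}(i) b_{n,k}(j) Z k → (s / (s − λᵢ − λⱼ)) Z` in probability. -/
theorem bCoef_weighted_tendsto_in_probability {d : ℕ} [NeZero d] (hd : 2 ≤ d) (s t0 : ℝ)
    (hs : 0 < s) (ht0 : 0 < t0) (lam : Fin d → ℝ) (hlam0 : lam 0 = s) (hanti : Antitone lam)
    (hsmall : ∀ j : Fin d, j ≠ 0 → 2 * lam j < s)
    {Ω : Type*} [mΩ : MeasurableSpace Ω] (μ : Measure Ω) [IsProbabilityMeasure μ]
    (Z : ℕ → Ω → ℝ) (Zlim : Ω → ℝ) (hZmeas : ∀ n, Measurable (Z n)) (hZlim : Measurable Zlim)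
    (hprob : TendstoInMeasure μ Z atTop Zlim)
    (hint : ∀ n, Integrable (fun ω => Z n ω - Zlim ω) μ)
    (hL1 : Tendsto (fun n => ∫ ω, |Z n ω - Zlim ω| ∂μ) atTop (𝓝 0)) :
    ∀ i j : Fin d, i ≠ 0 → j ≠ 0 → i ≤ j →
      TendstoInMeasure μ
        (fun (n : ℕ) ω => (1 / n : ℝ) * ∑ k ∈ Finset.Icc 1 n,
          bCoef s t0 (lam i) n k * bCoef s t0 (lam j) n k * Z k ω)
        atTop (fun ω => s / (s - lam i - lam j) * Zlim ω) :=
  bCoef_weighted_tendsto_in_probability_general s t0 hs lam hsmall (mΩ := mΩ) μ Z Zlim hZlim hint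
    hL1
end
end

section
/- Uniform limit of normalized partial products: for λ ∈ ℝ and ℓ > 0, define F_m^m(ℓ, λ) = 1 and F_m^n(ℓ, λ) = ∏_{i=m}^{n−1} (1 + λ/(ℓ + i)) for integers n > m ≥ 0. Then lim_{m→∞} sup_{n≥m} (m/n)^{λ} F_m^n(ℓ, λ) = 1. -/
/-!
Taking logarithms,
`(m/n)^λ F_m^n = exp (∑_{i=m}^{n-1} (log (1 + λ/(ℓ+i)) - λ log (1 + 1/i)))`,
since `λ log (1 + 1/i) = λ (log (i+1) - log i)` telescopes to `λ log (n/m)`. Both logarithms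
equal their first-order Taylor term up to `O(1/i²)`, and the first-order terms `λ/(ℓ+i)` and
`λ/i` also differ by `O(1/i²)`, so the exponent is at most `C/m` uniformly in `n ≥ m`. Hence the
supremum lies between `1` (the term `n = m`) and `exp (C/m) → 1`.
-/

open Filter
open scoped Topology

noncomputable section

/-- The partial products `F_m^n(ℓ, λ) = ∏_{i=m}^{n-1} (1 + λ / (ℓ + i))`, with the
convention `F_m^m = 1` (empty product). -/
def prodF (ℓ lam : ℝ) (m n : ℕ) : ℝ :=
  ∏ i ∈ Finset.Ico m n, (1 + lam / (ℓ + i))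

open Finset Real

lemma abs_log_one_add_sub_self_le {y : ℝ} (hy : |y| ≤ 1 / 2) :
    |log (1 + y) - y| ≤ 2 * y ^ 2 := by
  have h := abs_log_sub_add_sum_range_le (x := -y) (by rw [abs_neg]; linarith) 1
  simp only [sum_range_one, zero_add, pow_one, abs_neg, Nat.cast_zero, div_one,
    sub_neg_eq_add, neg_add_eq_sub, one_add_one_eq_two, sq_abs] at h
  refine h.trans ?_
  rw [div_le_iff₀ (by linarith)]
  nlinarith [sq_nonneg y, abs_nonneg y]

lemma abs_div_add_le_half {lam ℓ t : ℝ} (hℓ : 0 ≤ ℓ) (ht : 0 < t)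
    (hlam : 2 * |lam| ≤ t) :
    |lam / (ℓ + t)| ≤ 1 / 2 := by
  rw [abs_div, abs_of_pos (by linarith : 0 < ℓ + t), div_le_iff₀ (by linarith)]
  linarith

lemma abs_log_one_add_div_sub_mul_log_le {lam ℓ t : ℝ} (hℓ : 0 ≤ ℓ) (ht : 2 ≤ t)
    (hlam : 2 * |lam| ≤ t) :
    |log (1 + lam / (ℓ + t)) - lam * log (1 + 1 / t)| ≤
      (2 * lam ^ 2 + |lam| * ℓ + 2 * |lam|) / t ^ 2 := by
  set x := lam / (ℓ + t) with hx
  set u := 1 / t with hu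
  have ht0 : 0 < t := by linarith
  have hxu : |x - lam * u| ≤ |lam| * ℓ / t ^ 2 := by
    rw [show x - lam * u = -(lam * ℓ) / (t * (ℓ + t)) by rw [hx, hu]; field_simp; ring,
      abs_div, abs_neg, abs_mul, abs_of_nonneg hℓ, abs_of_pos (by nlinarith : 0 < t * (ℓ + t))]
    gcongr
    nlinarith
  have hx2 : x ^ 2 ≤ lam ^ 2 / t ^ 2 := by
    rw [hx, div_pow]
    gcongr
    linarith
  calc |log (1 + x) - lam * log (1 + u)|
      = |(log (1 + x) - x) - lam * (log (1 + u) - u) + (x - lam * u)| := by ring_nf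
    _ ≤ |log (1 + x) - x| + |lam| * |log (1 + u) - u| + |x - lam * u| := by
      rw [← abs_mul]
      exact (abs_add_le _ _).trans (add_le_add_left (abs_sub _ _) _)
    _ ≤ 2 * x ^ 2 + |lam| * (2 * u ^ 2) + |lam| * ℓ / t ^ 2 := by
      gcongr
      · exact abs_log_one_add_sub_self_le (abs_div_add_le_half hℓ ht0 hlam)
      · refine abs_log_one_add_sub_self_le ?_
        rw [hu, abs_of_pos (by positivity), div_le_div_iff₀ ht0 two_pos]
        linarith
    _ ≤ 2 * (lam ^ 2 / t ^ 2) + |lam| * (2 * u ^ 2) + |lam| * ℓ / t ^ 2 := by gcongr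
    _ = (2 * lam ^ 2 + |lam| * ℓ + 2 * |lam|) / t ^ 2 := by rw [hu]; field_simp; ring

lemma sum_Ico_inv_sq_le (m n : ℕ) :
    ∑ i ∈ Ico (m + 1) n, ((i : ℝ) ^ 2)⁻¹ ≤ 2 / (m + 1) := by
  rw [Finset.Ico_add_one_left_eq_Ioo]
  exact sum_Ioo_inv_sq_le m n

lemma normalized_prodF_eq_exp_sum {ℓ lam : ℝ} {m n : ℕ} (hm : 0 < m) (hmn : m ≤ n)
    (hpos : ∀ i ∈ Ico m n, 0 < 1 + lam / (ℓ + i)) :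
    ((m : ℝ) / n) ^ lam * prodF ℓ lam m n =
      exp (∑ i ∈ Ico m n, (log (1 + lam / (ℓ + i)) - lam * log (1 + 1 / i))) := by
  have hm0 : (0 : ℝ) < m := Nat.cast_pos.mpr hm
  have hn0 : (0 : ℝ) < n := Nat.cast_pos.mpr (hm.trans_le hmn)
  have htel : ∑ i ∈ Ico m n, lam * log (1 + 1 / (i : ℝ)) = lam * log n - lam * log m := by
    rw [← sum_Ico_sub (fun i : ℕ => lam * log i) hmn]
    refine sum_congr rfl fun i hi => ?_
    have hi0 : (0 : ℝ) < i := hm0.trans_le (Nat.cast_le.mpr (mem_Ico.mp hi).1)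
    rw [one_add_div hi0.ne', log_div (by positivity) hi0.ne']
    push_cast
    ring
  rw [sum_sub_distrib, htel, prodF, ← prod_congr rfl fun i hi => exp_log (hpos i hi), ← exp_sum,
    rpow_def_of_pos (div_pos hm0 hn0), log_div hm0.ne' hn0.ne', ← exp_add]
  ring_nf

lemma normalized_prodF_le_exp {ℓ lam : ℝ} (hℓ : 0 ≤ ℓ) {m n : ℕ} (hm : 2 ≤ m)
    (hlam : 2 * |lam| ≤ m) (hmn : m ≤ n) :
    ((m : ℝ) / n) ^ lam * prodF ℓ lam m n ≤
      exp ((2 * lam ^ 2 + |lam| * ℓ + 2 * |lam|) * (2 / m)) := by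
  have hge : ∀ i ∈ Ico m n, (2 : ℝ) ≤ i ∧ 2 * |lam| ≤ i := fun i hi => by
    have hmi : (m : ℝ) ≤ i := Nat.cast_le.mpr (mem_Ico.mp hi).1
    exact ⟨le_trans (by exact_mod_cast hm) hmi, hlam.trans hmi⟩
  have hpos : ∀ i ∈ Ico m n, 0 < 1 + lam / (ℓ + i) := fun i hi => by
    have := abs_le.mp (abs_div_add_le_half hℓ (by linarith [hge i hi]) (hge i hi).2)
    linarith
  rw [normalized_prodF_eq_exp_sum (by omega) hmn hpos, exp_le_exp]
  obtain ⟨k, rfl⟩ : ∃ k, m = k + 1 := ⟨m - 1, by omega⟩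
  calc ∑ i ∈ Ico (k + 1) n, (log (1 + lam / (ℓ + i)) - lam * log (1 + 1 / i))
      ≤ ∑ i ∈ Ico (k + 1) n, (2 * lam ^ 2 + |lam| * ℓ + 2 * |lam|) * ((i : ℝ) ^ 2)⁻¹ :=
        sum_le_sum fun i hi => (le_abs_self _).trans <|
          (abs_log_one_add_div_sub_mul_log_le hℓ (hge i hi).1 (hge i hi).2).trans_eq
            (div_eq_mul_inv _ _)
    _ ≤ (2 * lam ^ 2 + |lam| * ℓ + 2 * |lam|) * (2 / ((k + 1 : ℕ) : ℝ)) := by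
      rw [← mul_sum]
      push_cast
      gcongr
      exact sum_Ico_inv_sq_le k n

lemma normalized_prodF_self (ℓ lam : ℝ) {m : ℕ} (hm : m ≠ 0) :
    ((m : ℝ) / m) ^ lam * prodF ℓ lam m m = 1 := by
  rw [prodF, Ico_self, prod_empty, div_self (Nat.cast_ne_zero.mpr hm), one_rpow, mul_one]

/-- **Uniform limit of normalized partial products** (Lemma 2, Eq. (34)).  For `λ ∈ ℝ` and
`ℓ > 0`, `lim_{m→∞} sup_{n ≥ m} (m/n)^λ F_m^n(ℓ, λ) = 1`. -/
theorem prodF_normalized_sup_tendsto_one (lam ℓ : ℝ) (hℓ : 0 < ℓ) :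
    Tendsto (fun m : ℕ => ⨆ n : {n : ℕ // m ≤ n},
        ((m : ℝ) / ((n : ℕ) : ℝ)) ^ lam * prodF ℓ lam m (n : ℕ))
      atTop (𝓝 1) := by
  set C := 2 * lam ^ 2 + |lam| * ℓ + 2 * |lam|
  have hupper : Tendsto (fun m : ℕ => exp (C * (2 / m))) atTop (𝓝 1) := by
    simpa using ((tendsto_const_div_atTop_nhds_zero_nat 2).const_mul C).rexp
  have hbound : ∀ᶠ m : ℕ in atTop, ∀ n : {n : ℕ // m ≤ n},
      ((m : ℝ) / ((n : ℕ) : ℝ)) ^ lam * prodF ℓ lam m n ≤ exp (C * (2 / m)) := by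
    filter_upwards [eventually_ge_atTop 2, eventually_ge_atTop ⌈2 * |lam|⌉₊] with m hm hlam n
    exact normalized_prodF_le_exp hℓ.le hm (Nat.ceil_le.mp hlam) n.2
  refine tendsto_of_tendsto_of_tendsto_of_le_of_le' tendsto_const_nhds hupper ?_ ?_
  · filter_upwards [hbound, eventually_ne_atTop 0] with m hb hm
    calc (1 : ℝ) = ((m : ℝ) / m) ^ lam * prodF ℓ lam m m :=
          (normalized_prodF_self ℓ lam hm).symm
      _ ≤ _ := le_ciSup ⟨_, Set.forall_mem_range.2 hb⟩ ⟨m, le_rfl⟩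
  · filter_upwards [hbound] with m hb
    have : Nonempty {n : ℕ // m ≤ n} := ⟨⟨m, le_rfl⟩⟩
    exact ciSup_le hb
end
end

section
/- Uniform bound for normalized partial products: for λ ∈ ℝ and ℓ > 0, define F_m^m(ℓ, λ) = 1 and F_m^n(ℓ, λ) = ∏_{i=m}^{n−1} (1 + λ/(ℓ + i)) for integers n > m ≥ 0. Then there exists a positive constant K = K(λ, ℓ) such that |F_m^n(ℓ, λ)| ≤ K (n/m)^{λ} for all integers 1 ≤ m ≤ n. -/
open Filter
open scoped Topology

noncomputable section

/-!
Once `i ≥ |λ|` every factor `1 + λ/(ℓ + i)` is nonnegative, so `1 + x ≤ eˣ` bounds the product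
by `exp (λ ∑ 1/(ℓ + i))`. Telescoping `log (x + 1) - log x ≤ 1/x ≤ log x - log (x - 1)` puts
`∑_{i=m}^{n-1} 1/(ℓ + i)` within a constant of `log (n/m)`, which gives `C (n/m)^λ`. The at most
`⌈|λ|⌉` earlier factors are bounded crudely by `1 + |λ|/ℓ` each, and skipping them changes `n/m`
by a factor of at most `1 + ⌈|λ|⌉`.
-/
open Finset Real

theorem prod_one_add_le_exp_sum_of_nonneg {ι : Type*} (s : Finset ι) {f : ι → ℝ}
    (hf : ∀ i ∈ s, 0 ≤ 1 + f i) : ∏ i ∈ s, (1 + f i) ≤ exp (∑ i ∈ s, f i) :=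
  (prod_le_prod hf fun i _ ↦ (add_comm 1 (f i)).le.trans (add_one_le_exp _)).trans
    (exp_sum s f).symm.le

theorem one_add_div_nonneg_of_abs_le {a b : ℝ} (hb : 0 < b) (h : |a| ≤ b) : 0 ≤ 1 + a / b := by
  rw [one_add_div hb.ne']
  exact div_nonneg (by linarith [(abs_le.mp h).1]) hb.le

theorem rpow_le_rpow_abs_mul_rpow {x y c : ℝ} (lam : ℝ) (hy : 0 < y) (hyx : y ≤ x)
    (hxc : x ≤ c * y) : y ^ lam ≤ c ^ |lam| * x ^ lam := by
  have hx : 0 < x := hy.trans_le hyx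
  have hc : 0 < c := pos_of_mul_pos_left (hx.trans_le hxc) hy.le
  have hlog : log y ≤ log x := log_le_log hy hyx
  have hlog' : log x ≤ log c + log y := by
    rw [← log_mul hc.ne' hy.ne']
    exact log_le_log hx hxc
  rw [rpow_def_of_pos hy, rpow_def_of_pos hc, rpow_def_of_pos hx, ← exp_add, exp_le_exp]
  rcases le_total 0 lam with h | h
  · rw [abs_of_nonneg h]; nlinarith
  · rw [abs_of_nonpos h]; nlinarith

theorem log_add_one_sub_log_le_inv {x : ℝ} (hx : 0 < x) : log (x + 1) - log x ≤ x⁻¹ := by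
  have h := log_le_sub_one_of_pos (show 0 < (x + 1) / x by positivity)
  rwa [log_div (by positivity) hx.ne', add_div, div_self hx.ne', one_div,
    add_sub_cancel_left] at h

theorem inv_le_log_sub_log_sub_one {x : ℝ} (hx : 1 < x) : x⁻¹ ≤ log x - log (x - 1) := by
  have hx1 : 0 < x - 1 := by linarith
  have h := one_sub_inv_le_log_of_pos (show 0 < x / (x - 1) by positivity)
  rw [log_div (by positivity) hx1.ne', inv_div] at h
  convert h using 1
  field_simp
  ring

theorem log_sub_log_le_sum_Ico_inv {a : ℝ} {m n : ℕ} (ha : 0 < a + m) (hmn : m ≤ n) :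
    log (a + n) - log (a + m) ≤ ∑ i ∈ Ico m n, (a + i)⁻¹ := by
  rw [← sum_Ico_sub (fun i : ℕ ↦ log (a + i)) hmn]
  refine sum_le_sum fun i hi ↦ ?_
  have hi : (m : ℝ) ≤ i := by exact_mod_cast (mem_Ico.mp hi).1
  rw [Nat.cast_succ, ← add_assoc]
  exact log_add_one_sub_log_le_inv (by linarith)

theorem sum_Ico_inv_le_log_sub_log {a : ℝ} {m n : ℕ} (ha : 1 < a + m) (hmn : m ≤ n) :
    ∑ i ∈ Ico m n, (a + i)⁻¹ ≤ log (a + n - 1) - log (a + m - 1) := by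
  rw [← sum_Ico_sub (fun i : ℕ ↦ log (a + i - 1)) hmn]
  refine sum_le_sum fun i hi ↦ ?_
  have hi : (m : ℝ) ≤ i := by exact_mod_cast (mem_Ico.mp hi).1
  rw [Nat.cast_succ, ← add_assoc, add_sub_cancel_right]
  exact inv_le_log_sub_log_sub_one (by linarith)

theorem abs_sum_Ico_inv_sub_log_div_le {ℓ : ℝ} (hℓ : 0 < ℓ) {m n : ℕ} (hm : 1 ≤ m)
    (hmn : m ≤ n) :
    |∑ i ∈ Ico m n, (ℓ + i)⁻¹ - log (n / m)| ≤ 2 * log (1 + ℓ) - log ℓ := by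
  have hm' : (1 : ℝ) ≤ m := by exact_mod_cast hm
  have hn' : (m : ℝ) ≤ n := by exact_mod_cast hmn
  have hlower := log_sub_log_le_sum_Ico_inv (a := ℓ) (by linarith) hmn
  have hupper := sum_Ico_inv_le_log_sub_log (a := ℓ) (by linarith) hmn
  have hlog_mul {x y z : ℝ} (hx : 0 < x) (hy : 0 < y) (hz : 0 < z) (h : z ≤ x * y) :
      log z ≤ log x + log y := by
    rw [← log_mul hx.ne' hy.ne']; exact log_le_log hz h
  have h1 : log n ≤ log (ℓ + n) := log_le_log (by linarith) (by linarith)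
  have h2 : log (ℓ + m) ≤ log (1 + ℓ) + log m :=
    hlog_mul (by linarith) (by linarith) (by linarith) (by nlinarith)
  have h3 : log (ℓ + n - 1) ≤ log (1 + ℓ) + log n :=
    hlog_mul (by linarith) (by linarith) (by linarith) (by nlinarith)
  -- `ℓ + m - 1 ≥ ℓ m / (1 + ℓ)` because `(ℓ + m - 1)(1 + ℓ) - ℓ m = m - 1 + ℓ²`
  have h4 : log ℓ + log m ≤ log (1 + ℓ) + log (ℓ + m - 1) := by
    rw [← log_mul hℓ.ne' (by positivity), ← log_mul (by positivity) (by linarith)]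
    exact log_le_log (by positivity) (by nlinarith)
  have h5 : log ℓ ≤ log (1 + ℓ) := log_le_log hℓ (by linarith)
  rw [log_div (by linarith) (by linarith), abs_le]
  constructor <;> linarith

theorem prodF_mul (ℓ lam : ℝ) {m k n : ℕ} (hmk : m ≤ k) (hkn : k ≤ n) :
    prodF ℓ lam m k * prodF ℓ lam k n = prodF ℓ lam m n :=
  prod_Ico_consecutive _ hmk hkn

theorem abs_prodF_le_pow {ℓ : ℝ} (hℓ : 0 < ℓ) (lam : ℝ) (m n : ℕ) :
    |prodF ℓ lam m n| ≤ (1 + |lam| / ℓ) ^ (n - m) := by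
  rw [prodF, abs_prod, ← Nat.card_Ico, ← prod_const]
  refine prod_le_prod (fun _ _ ↦ abs_nonneg _) fun i _ ↦ ?_
  have hi : 0 < ℓ + i := by positivity
  calc |1 + lam / (ℓ + i)| ≤ 1 + |lam| / (ℓ + i) := by
        simpa [abs_div, abs_of_pos hi] using abs_add_le 1 (lam / (ℓ + i))
    _ ≤ 1 + |lam| / ℓ := by gcongr; linarith [i.cast_nonneg (α := ℝ)]

theorem prodF_le_of_factors_nonneg {ℓ lam : ℝ} (hℓ : 0 < ℓ) {m n : ℕ} (hm : 1 ≤ m)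
    (hmn : m ≤ n) (hfac : ∀ i ∈ Ico m n, 0 ≤ 1 + lam / (ℓ + i)) :
    prodF ℓ lam m n ≤ exp (|lam| * (2 * log (1 + ℓ) - log ℓ)) * ((n : ℝ) / m) ^ lam := by
  have hgap := abs_sum_Ico_inv_sub_log_div_le hℓ hm hmn
  have hm' : (0 : ℝ) < m := by exact_mod_cast hm
  have hn' : (0 : ℝ) < n := by exact_mod_cast hm.trans hmn
  set S := ∑ i ∈ Ico m n, (ℓ + i)⁻¹
  have hexp : lam * S ≤ |lam| * (2 * log (1 + ℓ) - log ℓ) + lam * log (n / m) :=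
    calc lam * S = lam * (S - log (n / m)) + lam * log (n / m) := by ring
      _ ≤ |lam| * |S - log (n / m)| + lam * log (n / m) := by
        rw [← abs_mul]; gcongr; exact le_abs_self _
      _ ≤ _ := by gcongr
  calc prodF ℓ lam m n ≤ exp (∑ i ∈ Ico m n, lam / (ℓ + i)) :=
        prod_one_add_le_exp_sum_of_nonneg _ hfac
    _ = exp (lam * S) := by simp only [S, mul_sum, div_eq_mul_inv]
    _ ≤ _ := by
        rw [rpow_def_of_pos (by positivity), ← exp_add, mul_comm (log _)]
        exact exp_le_exp.mpr hexp

theorem natCast_div_rpow_le_of_le_add (lam : ℝ) {m k n N : ℕ} (hm : 1 ≤ m) (hmk : m ≤ k)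
    (hkN : k ≤ m + N) (hkn : k ≤ n) :
    ((n : ℝ) / k) ^ lam ≤ (1 + N) ^ |lam| * ((n : ℝ) / m) ^ lam := by
  have hm' : (1 : ℝ) ≤ m := by exact_mod_cast hm
  have hmk' : (m : ℝ) ≤ k := by exact_mod_cast hmk
  have hkN' : (k : ℝ) ≤ m + N := by exact_mod_cast hkN
  have hkn' : (k : ℝ) ≤ n := by exact_mod_cast hkn
  have hn : (0 : ℝ) < n := by linarith
  have hk : (k : ℝ) ≤ (1 + N) * m := by nlinarith [N.cast_nonneg (α := ℝ)]
  refine rpow_le_rpow_abs_mul_rpow lam (div_pos hn (by linarith)) (by gcongr) ?_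
  rw [mul_div_assoc', div_le_div_iff₀ (by linarith) (by linarith)]
  nlinarith [mul_le_mul_of_nonneg_left hk hn.le]

/-- **Uniform bound for normalized partial products** (Lemma 2, Eq. (35)).  For `λ ∈ ℝ` and
`ℓ > 0` there is a positive constant `K = K(λ, ℓ)` such that
`|F_m^n(ℓ, λ)| ≤ K (n/m)^λ` for all integers `1 ≤ m ≤ n`. -/
theorem prodF_uniform_bound (lam ℓ : ℝ) (hℓ : 0 < ℓ) :
    ∃ K : ℝ, 0 < K ∧ ∀ m n : ℕ, 1 ≤ m → m ≤ n →
      |prodF ℓ lam m n| ≤ K * ((n : ℝ) / (m : ℝ)) ^ lam := by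
  set N := ⌈|lam|⌉₊
  set A := (1 + |lam| / ℓ) ^ N
  set E := exp (|lam| * (2 * log (1 + ℓ) - log ℓ))
  refine ⟨A * E * (1 + N) ^ |lam|, by positivity, fun m n hm hmn ↦ ?_⟩
  set k := min (m + N) n
  have hmk : m ≤ k := by omega
  have hkn : k ≤ n := min_le_right _ _
  have hhead : |prodF ℓ lam m k| ≤ A :=
    (abs_prodF_le_pow hℓ lam m k).trans (pow_le_pow_right₀ (by simp; positivity) (by omega))
  have hfac : ∀ i ∈ Ico k n, 0 ≤ 1 + lam / (ℓ + i) := fun i hi ↦ by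
    have hNi : N ≤ i := by simp only [mem_Ico] at hi; omega
    refine one_add_div_nonneg_of_abs_le (by positivity) ?_
    linarith [Nat.le_ceil |lam|, (Nat.cast_le (α := ℝ)).mpr hNi]
  have htail_nonneg : 0 ≤ prodF ℓ lam k n := prod_nonneg hfac
  calc |prodF ℓ lam m n| = |prodF ℓ lam m k| * prodF ℓ lam k n := by
        rw [← prodF_mul ℓ lam hmk hkn, abs_mul, abs_of_nonneg htail_nonneg]
    _ ≤ A * (E * ((n : ℝ) / k) ^ lam) :=
        mul_le_mul hhead (prodF_le_of_factors_nonneg hℓ (hm.trans hmk) hkn hfac)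
          htail_nonneg (by positivity)
    _ ≤ A * (E * ((1 + N) ^ |lam| * ((n : ℝ) / m) ^ lam)) := by
        gcongr; exact natCast_div_rpow_le_of_le_add lam hm hmk (min_le_left _ _) hkn
    _ = A * E * (1 + N) ^ |lam| * ((n : ℝ) / m) ^ lam := by ring
end
end
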